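/- arXiv:1807.08020 — 13 statements merged into one kernel-verified Lean document; each statement's English description precedes it below -/
import Mathlib

section
/- In a frame A, the map ξ defined by ξ(a) = ⋁{b ∈ A : b ⪯ a} is a pre-nucleus, i.e., it is inflationary, monotone, and satisfies ξ(a) ∧ ξ(b) ≤ ξ(a ∧ b). -/
/-- `a ⪯ b` iff for every `c`, `a ⊔ c = ⊤` implies `b ⊔ c = ⊤`. -/
def preceq {A : Type*} [CompleteLattice A] (a b : A) : Prop :=
  ∀ c : A, a ⊔ c = ⊤ → b ⊔ c = ⊤

/-- `ξ(a) = ⋁ {b : b ⪯ a}`. -/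
def xi {A : Type*} [CompleteLattice A] (a : A) : A :=
  sSup {b | preceq b a}

theorem xi_is_prenucleus {A : Type*} [Order.Frame A] :
    (∀ a : A, a ≤ xi a) ∧
    (∀ a b : A, a ≤ b → xi a ≤ xi b) ∧
    (∀ a b : A, xi a ⊓ xi b ≤ xi (a ⊓ b)) := by
  refine ⟨fun a => le_sSup (fun c h => h), fun a b hab => sSup_le_sSup (fun x hx c hc => ?_),
    fun a b => ?_⟩
  · exact eq_top_iff.2 (by rw [← hx c hc]; exact sup_le_sup_right hab c)
  · rw [xi, xi, sSup_inf_eq]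
    refine iSup₂_le fun x hx => ?_
    rw [inf_sSup_eq]
    refine iSup₂_le fun y hy => le_sSup fun c hc => ?_
    have h1 : x ⊔ c = ⊤ := by
      rw [eq_top_iff, ← hc]; exact sup_le_sup_right inf_le_left c
    have h2 : y ⊔ c = ⊤ := by
      rw [eq_top_iff, ← hc]; exact sup_le_sup_right inf_le_right c
    rw [sup_inf_right, hx c h1, hy c h2, inf_top_eq]
end

section
/- The pointwise join of a nonempty directed family of pre-nuclei on a frame is a pre-nucleus. -/
/-- A pre-nucleus: an inflationary monotone map with `f a ⊓ f b ≤ f (a ⊓ b)`. -/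
def IsPrenucleus {A : Type*} [CompleteLattice A] (f : A → A) : Prop :=
  (∀ a, a ≤ f a) ∧ (∀ a b, a ≤ b → f a ≤ f b) ∧ (∀ a b, f a ⊓ f b ≤ f (a ⊓ b))

theorem pointwise_join_of_directed_prenuclei {A : Type*} [Order.Frame A]
    (F : Set (A → A)) (hne : F.Nonempty)
    (hdir : ∀ f ∈ F, ∀ g ∈ F, ∃ h ∈ F, (∀ a, f a ≤ h a) ∧ (∀ a, g a ≤ h a))
    (hpre : ∀ f ∈ F, IsPrenucleus f) :
    IsPrenucleus (fun a => ⨆ f ∈ F, f a) := by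
  obtain ⟨f₀, hf₀⟩ := hne
  refine ⟨fun a => ?_, fun a b hab => ?_, fun a b => ?_⟩
  · exact le_trans ((hpre f₀ hf₀).1 a) (le_biSup (fun f => f a) hf₀)
  · exact iSup₂_le fun f hf => le_trans ((hpre f hf).2.1 a b hab)
      (le_biSup (fun g => g b) hf)
  · simp only [inf_iSup_eq, iSup_inf_eq]
    refine iSup₂_le fun f hf => iSup₂_le fun g hg => ?_
    obtain ⟨h, hh, hfh, hgh⟩ := hdir f hf g hg
    calc g a ⊓ f b ≤ h a ⊓ h b := inf_le_inf (hgh a) (hfh b)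
      _ ≤ h (a ⊓ b) := (hpre h hh).2.2 a b
      _ ≤ ⨆ k ∈ F, k (a ⊓ b) := le_biSup (fun k => k (a ⊓ b)) hh
end

section
/- If f is a pre-nucleus on a frame A such that f(a) = ⊤ implies a = ⊤ for all a, then f(a) ⪯ a for all a ∈ A, and consequently f ≤ ξ pointwise. -/
theorem prenucleus_admitting_only_top_le_xi {A : Type*} [Order.Frame A]
    (f : A → A) (hf : IsPrenucleus f) (hadm : ∀ a : A, f a = ⊤ → a = ⊤) :
    (∀ a : A, preceq (f a) a) ∧ (∀ a : A, f a ≤ xi a) := by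
  obtain ⟨hinf, hmono, _⟩ := hf
  have key : ∀ a : A, preceq (f a) a := by
    intro a c hc
    apply hadm
    have h1 : f a ≤ f (a ⊔ c) := hmono _ _ le_sup_left
    have h2 : c ≤ f (a ⊔ c) := le_trans (hinf c) (hmono _ _ le_sup_right)
    exact top_unique (hc ▸ sup_le h1 h2)
  exact ⟨key, fun a => le_sSup (key a)⟩
end

section
/- Let A be a frame, a, b ∈ A with b ⪯ a. Define g(c) = ⋁{x ∈ A : x ≤ b ∨ c and x ∧ a ≤ c}. Then g is a nucleus on A. -/
theorem g_is_nucleus {A : Type*} [Order.Frame A] (a b : A) (hba : preceq b a) :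
    let g : A → A := fun c => sSup {x | x ≤ b ⊔ c ∧ x ⊓ a ≤ c}
    (∀ c, c ≤ g c) ∧ (∀ c c', c ≤ c' → g c ≤ g c') ∧
    (∀ c c', g c ⊓ g c' ≤ g (c ⊓ c')) ∧ (∀ c, g (g c) = g c) := by
  intro g
  have hle : ∀ c, g c ≤ b ⊔ c := fun c => sSup_le fun x hx => hx.1
  have hinf : ∀ c, g c ⊓ a ≤ c := by
    intro c
    rw [show g c ⊓ a = sSup {x | x ≤ b ⊔ c ∧ x ⊓ a ≤ c} ⊓ a from rfl, sSup_inf_eq]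
    exact iSup₂_le fun x hx => hx.2
  have hmem : ∀ c, g c ∈ {x | x ≤ b ⊔ c ∧ x ⊓ a ≤ c} := fun c => ⟨hle c, hinf c⟩
  have hincr : ∀ c : A, c ≤ g c := fun c =>
    le_sSup ⟨le_sup_right, inf_le_left⟩
  have hmono : ∀ c c' : A, c ≤ c' → g c ≤ g c' := by
    intro c c' h
    exact sSup_le fun x hx =>
      le_sSup ⟨hx.1.trans (sup_le_sup_left h b), hx.2.trans h⟩
  refine ⟨hincr, hmono, ?_, ?_⟩
  · intro c c'
    refine le_sSup ⟨?_, ?_⟩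
    · exact le_inf ((inf_le_left.trans (hle c)))
        ((inf_le_right.trans (hle c'))) |>.trans (by rw [sup_inf_left])
    · exact le_inf
        ((inf_le_inf_right a inf_le_left).trans (hinf c))
        ((inf_le_inf_right a inf_le_right).trans (hinf c'))
  · intro c
    refine le_antisymm ?_ (hincr _)
    refine sSup_le fun x hx => le_sSup ⟨?_, ?_⟩
    · exact hx.1.trans (sup_le le_sup_left ((hle c)))
    · calc x ⊓ a = x ⊓ a ⊓ a := by rw [inf_assoc, inf_idem]
        _ ≤ g c ⊓ a := inf_le_inf_right a hx.2
        _ ≤ c := hinf c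
end

section
/- Let A be a frame, a, b ∈ A with b ⪯ a, and define g(c) = ⋁{x ∈ A : x ≤ b ∨ c and x ∧ a ≤ c}. Then g(c) = ⊤ implies c = ⊤, and b ≤ g(a). -/
theorem g_admits_only_top_and_b_le_ga {A : Type*} [Order.Frame A] (a b : A) (hba : preceq b a) :
    let g : A → A := fun c => sSup {x | x ≤ b ⊔ c ∧ x ⊓ a ≤ c}
    (∀ c : A, g c = ⊤ → c = ⊤) ∧ b ≤ g a := by
  intro g
  constructor
  · intro c hc
    have hc' : sSup {x | x ≤ b ⊔ c ∧ x ⊓ a ≤ c} = ⊤ := hc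
    have hle : sSup {x | x ≤ b ⊔ c ∧ x ⊓ a ≤ c} ≤ b ⊔ c := sSup_le fun x hx => hx.1
    have hbc : b ⊔ c = ⊤ := top_le_iff.mp (hc' ▸ hle)
    have hac : a ⊔ c = ⊤ := hba c hbc
    have hac2 : a ≤ c := by
      have h1 : a = a ⊓ sSup {x | x ≤ b ⊔ c ∧ x ⊓ a ≤ c} := by
        rw [hc', inf_top_eq]
      rw [h1, inf_sSup_eq]
      exact iSup₂_le fun x hx => by rw [inf_comm]; exact hx.2
    rw [sup_eq_right.mpr hac2] at hac
    exact hac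
  · exact le_sSup ⟨le_sup_left, inf_le_right⟩
end

section
/- For every frame A, ξ equals the pointwise join of all nuclei g on A satisfying 'g(a) = ⊤ implies a = ⊤', and also equals the pointwise join of all pre-nuclei with this property. -/
def IsNucleus {A : Type*} [CompleteLattice A] (f : A → A) : Prop :=
  IsPrenucleus f ∧ ∀ a, f (f a) = f a

section Aux

variable {A : Type*} [Order.Frame A]

lemma prenucleus_apply_le_xi {f : A → A} (hf : IsPrenucleus f)
    (h : ∀ c, f c = ⊤ → c = ⊤) (a : A) : f a ≤ xi a := by
  apply le_sSup
  intro c hc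
  apply h
  have h1 : f a ⊔ c ≤ f (a ⊔ c) :=
    sup_le (hf.2.1 a _ le_sup_left) ((hf.1 c).trans (hf.2.1 c _ le_sup_right))
  rw [hc] at h1
  exact top_le_iff.mp h1

lemma aux_nucleus {a b : A} (hba : preceq b a) :
    IsNucleus (fun x : A => (b ⊔ x) ⊓ (a ⇨ x)) ∧
    (∀ c, (b ⊔ c) ⊓ (a ⇨ c) = ⊤ → c = ⊤) := by
  set g : A → A := fun x => (b ⊔ x) ⊓ (a ⇨ x) with hg
  have infl : ∀ x, x ≤ g x := fun x =>
    le_inf le_sup_right (le_himp_iff.mpr inf_le_left)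
  have mono : ∀ x y, x ≤ y → g x ≤ g y := fun x y h =>
    inf_le_inf (sup_le_sup_left h b) (himp_le_himp_left h)
  have glex : ∀ x, g x ≤ b ⊔ x := fun x => inf_le_left
  have ghimp : ∀ x, g x ≤ a ⇨ x := fun x => inf_le_right
  refine ⟨⟨⟨infl, mono, ?_⟩, ?_⟩, ?_⟩
  · intro x y
    show (b ⊔ x) ⊓ (a ⇨ x) ⊓ ((b ⊔ y) ⊓ (a ⇨ y)) ≤ (b ⊔ x ⊓ y) ⊓ (a ⇨ x ⊓ y)
    rw [sup_inf_left, himp_inf_distrib, inf_inf_inf_comm]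
  · intro x
    refine le_antisymm (le_inf ?_ ?_) (infl (g x))
    · exact (glex (g x)).trans (sup_le le_sup_left ((glex x).trans (sup_le le_sup_left le_sup_right)))
    · rw [le_himp_iff]
      calc g (g x) ⊓ a ≤ (a ⇨ g x) ⊓ a := inf_le_inf_right a (ghimp (g x))
        _ ≤ g x ⊓ a := le_inf himp_inf_le inf_le_right
        _ ≤ (a ⇨ x) ⊓ a := inf_le_inf_right a (ghimp x)
        _ ≤ x := himp_inf_le
  · intro c hc
    rw [inf_eq_top_iff] at hc
    have hac : a ≤ c := himp_eq_top_iff.mp hc.2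
    have h2 := hba c hc.1
    exact top_le_iff.mp (h2 ▸ sup_le hac le_rfl)

end Aux

theorem xi_eq_join_of_nuclei_admitting_only_top {A : Type*} [Order.Frame A] :
    (∀ a : A, xi a = sSup {x | ∃ g : A → A, IsNucleus g ∧ (∀ c, g c = ⊤ → c = ⊤) ∧ x = g a}) ∧
    (∀ a : A, xi a = sSup {x | ∃ f : A → A, IsPrenucleus f ∧ (∀ c, f c = ⊤ → c = ⊤) ∧ x = f a}) := by
  have hpre_le : ∀ a : A,
      sSup {x | ∃ f : A → A, IsPrenucleus f ∧ (∀ c, f c = ⊤ → c = ⊤) ∧ x = f a} ≤ xi a := by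
    intro a
    apply sSup_le
    rintro x ⟨f, hf, hft, rfl⟩
    exact prenucleus_apply_le_xi hf hft a
  have hxi_le : ∀ a : A,
      xi a ≤ sSup {x | ∃ g : A → A, IsNucleus g ∧ (∀ c, g c = ⊤ → c = ⊤) ∧ x = g a} := by
    intro a
    apply sSup_le
    intro b hba
    obtain ⟨hnuc, htop⟩ := aux_nucleus (A := A) hba
    have hmem : (b ⊔ a) ⊓ (a ⇨ a) ∈
        {x | ∃ g : A → A, IsNucleus g ∧ (∀ c, g c = ⊤ → c = ⊤) ∧ x = g a} :=
      ⟨_, hnuc, htop, rfl⟩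
    have : b ≤ (b ⊔ a) ⊓ (a ⇨ a) := by
      rw [himp_self, inf_top_eq]; exact le_sup_left
    exact this.trans (le_sSup hmem)
  have hnuc_le_pre : ∀ a : A,
      sSup {x | ∃ g : A → A, IsNucleus g ∧ (∀ c, g c = ⊤ → c = ⊤) ∧ x = g a} ≤
      sSup {x | ∃ f : A → A, IsPrenucleus f ∧ (∀ c, f c = ⊤ → c = ⊤) ∧ x = f a} := by
    intro a
    apply sSup_le
    rintro x ⟨g, hg, hgt, rfl⟩
    exact le_sSup ⟨g, hg.1, hgt, rfl⟩
  constructor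
  · intro a
    exact le_antisymm (hxi_le a) ((hnuc_le_pre a).trans (hpre_le a))
  · intro a
    exact le_antisymm ((hxi_le a).trans (hnuc_le_pre a)) (hpre_le a)
end

section
/- There exists a frame A (namely the open-set frame of an explicit topological space) on which ξ is not idempotent, i.e., ξ is a pre-nucleus that is not a nucleus. -/
open TopologicalSpace

/-- Opens of the example space: each slice (in the first coordinate) is
downward closed, and if a `none`-point (a `*`-point) belongs to the set then
cofinitely many `some`-slices are full. -/
def Xopen (W : Set (ℕ × Option ℕ)) : Prop :=
  (∀ m m' y, m' ≤ m → (m, y) ∈ W → (m', y) ∈ W) ∧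
  (∀ m, (m, (none : Option ℕ)) ∈ W → ∃ N : ℕ, ∀ n, N ≤ n → ∀ k, (k, some n) ∈ W)

def XTop : TopologicalSpace (ℕ × Option ℕ) where
  IsOpen := Xopen
  isOpen_univ := ⟨fun _ _ _ _ _ => trivial, fun _ _ => ⟨0, fun _ _ _ => trivial⟩⟩
  isOpen_inter := fun U V hU hV =>
    ⟨fun m m' y h hm => ⟨hU.1 m m' y h hm.1, hV.1 m m' y h hm.2⟩, fun m hm => by
      obtain ⟨N1, h1⟩ := hU.2 m hm.1
      obtain ⟨N2, h2⟩ := hV.2 m hm.2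
      exact ⟨max N1 N2, fun n hn k =>
        ⟨h1 n (le_trans (le_max_left _ _) hn) k, h2 n (le_trans (le_max_right _ _) hn) k⟩⟩⟩
  isOpen_sUnion := fun F hF =>
    ⟨fun m m' y h hm => by
      obtain ⟨W, hW, hmW⟩ := hm
      exact ⟨W, hW, (hF W hW).1 m m' y h hmW⟩, fun m hm => by
      obtain ⟨W, hW, hmW⟩ := hm
      obtain ⟨N, hN⟩ := (hF W hW).2 m hmW
      exact ⟨N, fun n hn k => ⟨W, hW, hN n hn k⟩⟩⟩

/-- There is a (spatial) frame on which the pre-nucleus `ξ` is not idempotent,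
hence not a nucleus. -/
theorem xi_not_a_nucleus :
    ∃ (S : Type) (_ : TopologicalSpace S) (U : TopologicalSpace.Opens S),
      xi (xi U) ≠ xi U := by
  letI t : TopologicalSpace (ℕ × Option ℕ) := XTop
  refine ⟨ℕ × Option ℕ, t, ⊥, ?_⟩
  -- basic opens
  have hbk : ∀ k : ℕ, Xopen {p : ℕ × Option ℕ | p.1 ≤ k ∧ p.2 ≠ none} := by
    intro k
    refine ⟨fun m m' y h hm => ⟨le_trans h hm.1, hm.2⟩, fun m hm => absurd rfl hm.2⟩
  have hbstar : Xopen {p : ℕ × Option ℕ | p.2 ≠ none ∨ p.1 = 0} := by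
    refine ⟨fun m m' y h hm => ?_, fun m hm => ⟨0, fun n hn k => Or.inl (by simp)⟩⟩
    rcases hm with h1 | h1
    · exact Or.inl h1
    · subst h1; exact Or.inr (Nat.le_zero.mp h)
  have hcN : ∀ N : ℕ, Xopen {p : ℕ × Option ℕ | p.2 ≠ some N} := by
    intro N
    refine ⟨fun m m' y h hm => hm, fun m hm => ⟨N + 1, fun n hn k => ?_⟩⟩
    simp only [Set.mem_setOf_eq]
    intro h
    exact absurd (Option.some.inj h) (by omega)
  have memsup : ∀ (U V : Opens (ℕ × Option ℕ)) (x : ℕ × Option ℕ),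
      x ∈ U ⊔ V ↔ x ∈ U ∨ x ∈ V := by
    intro U V x
    rw [← SetLike.mem_coe, Opens.coe_sup]
    simp [← SetLike.mem_coe]
  -- bk k ⪯ ⊥
  have hpre_bk : ∀ k : ℕ, preceq (⟨_, hbk k⟩ : Opens (ℕ × Option ℕ)) ⊥ := by
    intro k c hc
    rw [bot_sup_eq, eq_top_iff]
    intro p _
    have hq : ∀ q : ℕ × Option ℕ, q ∈ (⟨_, hbk k⟩ : Opens (ℕ × Option ℕ)) ⊔ c := by
      intro q; rw [hc]; trivial
    obtain ⟨m, y⟩ := p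
    cases y with
    | none =>
        rcases (memsup _ _ _).mp (hq (m, none)) with h | h
        · exact absurd rfl h.2
        · exact h
    | some n =>
        rcases (memsup _ _ _).mp (hq (max m (k + 1), some n)) with h | h
        · exact absurd h.1 (Nat.not_le.mpr (lt_of_lt_of_le (Nat.lt_succ_self k) (le_max_right m (k+1))))
        · exact (c.isOpen.1 _ m (some n) (le_max_left _ _) h)
  -- (0, none) ∉ xi ⊥
  have hnotin : ((0 : ℕ), (none : Option ℕ)) ∉ xi (⊥ : Opens (ℕ × Option ℕ)) := by
    intro h
    rw [xi, Opens.mem_sSup] at h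
    obtain ⟨b, hb, hmem⟩ := h
    obtain ⟨N, hN⟩ := b.isOpen.2 0 hmem
    have hc : b ⊔ (⟨_, hcN N⟩ : Opens (ℕ × Option ℕ)) = ⊤ := by
      rw [eq_top_iff]
      intro p _
      rw [memsup]
      by_cases hp : p.2 = some N
      · left
        have := hN N le_rfl p.1
        rw [← hp] at this
        exact this
      · exact Or.inr hp
    have := hb _ hc
    rw [bot_sup_eq] at this
    have h0 : ((0 : ℕ), some N) ∈ (⟨_, hcN N⟩ : Opens (ℕ × Option ℕ)) := by
      rw [this]; trivial
    exact h0 rfl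
  -- (0, none) ∈ xi (xi ⊥)
  have hin : ((0 : ℕ), (none : Option ℕ)) ∈ xi (xi (⊥ : Opens (ℕ × Option ℕ))) := by
    rw [xi, Opens.mem_sSup]
    refine ⟨⟨_, hbstar⟩, ?_, Or.inr rfl⟩
    intro c hc
    rw [eq_top_iff]
    intro p _
    rw [memsup]
    obtain ⟨m, y⟩ := p
    cases y with
    | some n =>
        left
        rw [xi, Opens.mem_sSup]
        exact ⟨_, hpre_bk m, le_refl m, by simp⟩
    | none =>
        right
        have hq : ((m + 1 : ℕ), (none : Option ℕ)) ∈ (⟨_, hbstar⟩ : Opens (ℕ × Option ℕ)) ⊔ c := by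
          rw [hc]; trivial
        rcases (memsup _ _ _).mp hq with h | h
        · rcases h with h | h
          · exact absurd rfl h
          · exact absurd h (by omega)
        · exact c.isOpen.1 (m + 1) m none (Nat.le_succ m) h
  intro h
  exact hnotin (h ▸ hin)
end

section
/- For a topological space S and open sets U, W, one has U ⪯ W in the frame of open sets of S if and only if for every point u ∈ U \ W, the closure of {u} is not contained in U. -/
theorem preceq_opens_iff {S : Type*} [TopologicalSpace S] (U W : TopologicalSpace.Opens S) :
    preceq U W ↔ ∀ u ∈ (U : Set S) \ (W : Set S), ¬ closure {u} ⊆ (U : Set S) := by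
  constructor
  · intro h u hu hcl
    have hV : IsOpen (closure {u})ᶜ := isClosed_closure.isOpen_compl
    have h1 : U ⊔ ⟨(closure {u})ᶜ, hV⟩ = ⊤ := by
      ext x
      simp only [TopologicalSpace.Opens.coe_sup, TopologicalSpace.Opens.coe_top,
        Set.mem_union, Set.mem_univ, iff_true]
      by_cases hx : x ∈ closure ({u} : Set S)
      · exact Or.inl (hcl hx)
      · exact Or.inr hx
    have h2 := h _ h1
    have : u ∈ (W : Set S) ∪ ((⟨(closure {u})ᶜ, hV⟩ : TopologicalSpace.Opens S) : Set S) := by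
      have := congrArg (fun o : TopologicalSpace.Opens S => (o : Set S)) h2
      simp only [TopologicalSpace.Opens.coe_sup, TopologicalSpace.Opens.coe_top] at this
      rw [this]; trivial
    rcases this with hw | hc
    · exact hu.2 hw
    · exact hc (subset_closure rfl)
  · intro h V hUV
    ext x
    simp only [TopologicalSpace.Opens.coe_sup, TopologicalSpace.Opens.coe_top,
      Set.mem_union, Set.mem_univ, iff_true]
    by_contra hx
    push_neg at hx
    have hxU : x ∈ (U : Set S) := by
      have := congrArg (fun o : TopologicalSpace.Opens S => (o : Set S)) hUV
      simp only [TopologicalSpace.Opens.coe_sup, TopologicalSpace.Opens.coe_top] at this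
      have hxu : x ∈ (U : Set S) ∪ (V : Set S) := by rw [this]; trivial
      rcases hxu with h1 | h2
      · exact h1
      · exact absurd h2 hx.2
    have := h x ⟨hxU, hx.1⟩
    obtain ⟨y, hy, hyU⟩ := Set.not_subset.mp this
    have hyV : y ∈ (V : Set S) := by
      have := congrArg (fun o : TopologicalSpace.Opens S => (o : Set S)) hUV
      simp only [TopologicalSpace.Opens.coe_sup, TopologicalSpace.Opens.coe_top] at this
      have : y ∈ (U : Set S) ∪ (V : Set S) := by rw [this]; trivial
      rcases this with h1 | h2
      · exact absurd h1 hyU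
      · exact h2
    have : x ∈ (V : Set S) := by
      rcases (mem_closure_iff).mp hy (V : Set S) V.isOpen hyV with ⟨z, hz1, hz2⟩
      rwa [Set.mem_singleton_iff.mp hz2] at hz1
    exact hx.2 this
end

section
/- Let D be the frame of downward closed subsets of ω. Then ξ(⊥) = ⊤ in D, i.e., the bottom element reaches the top after one application of ξ. -/
theorem xi_bot_eq_top_lowersets_nat : xi (⊥ : LowerSet ℕ) = ⊤ := by
  apply top_le_iff.mp
  intro n _
  have hmem : (LowerSet.Iic n) ∈ {b : LowerSet ℕ | preceq b ⊥} := by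
    intro c hc
    have hc' : c = ⊤ := by
      apply top_le_iff.mp
      intro m _
      have h1 : max m (n + 1) ∈ LowerSet.Iic n ⊔ c := by
        rw [hc]; trivial
      rcases h1 with h1 | h1
      · exfalso
        have : max m (n + 1) ≤ n := h1
        omega
      · exact c.lower (le_max_left _ _) h1
    rw [hc', sup_top_eq]
  have : (n : ℕ) ∈ LowerSet.Iic n := le_refl n
  exact le_sSup hmem this
end

section
/- For a distributive lattice D and ideals I, and a ∈ D: the principal ideal ↓a satisfies ↓a ⪯ I in the frame of ideals of D if and only if for every b ∈ D with a ∨ b = ⊤ there exists c ∈ I with c ∨ b = ⊤. Consequently ξ(I) = {a ∈ D : ∀b (a ∨ b = ⊤ → ∃c ∈ I, c ∨ b = ⊤)}. -/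
/-- `⪯` in any bounded lattice (in particular in the frame of ideals). -/
def preceqI {D : Type*} [DistribLattice D] [BoundedOrder D]
    (J I : Order.Ideal D) : Prop :=
  ∀ K : Order.Ideal D, J ⊔ K = ⊤ → I ⊔ K = ⊤

/-- The set-level description of `ξ` on ideals. -/
def xiSet {D : Type*} [DistribLattice D] [BoundedOrder D] (I : Set D) : Set D :=
  {a | ∀ b : D, a ⊔ b = ⊤ → ∃ c ∈ I, c ⊔ b = ⊤}


private lemma mem_top_ideal {D : Type*} [DistribLattice D] [BoundedOrder D] (x : D) :
    x ∈ (⊤ : Order.Ideal D) := by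
  have h : (⊤ : Order.Ideal D) = sInf ∅ := sInf_empty.symm
  rw [h, Order.Ideal.mem_sInf]; simp

private lemma ideal_eq_top {D : Type*} [DistribLattice D] [BoundedOrder D]
    {X : Order.Ideal D} (h : (⊤ : D) ∈ X) : X = ⊤ := by
  refine le_antisymm (fun x _ => mem_top_ideal x) ?_
  intro x _
  exact X.lower le_top h

theorem principal_preceq_iff_and_xi_description {D : Type*} [DistribLattice D] [BoundedOrder D]
    (I : Order.Ideal D) :
    (∀ a : D, preceqI (Order.Ideal.principal a) I ↔
        ∀ b : D, a ⊔ b = ⊤ → ∃ c ∈ I, c ⊔ b = ⊤) ∧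
    (⋃ J ∈ {J : Order.Ideal D | preceqI J I}, (J : Set D)) = xiSet (I : Set D) := by
  have key : ∀ a : D, preceqI (Order.Ideal.principal a) I ↔
      ∀ b : D, a ⊔ b = ⊤ → ∃ c ∈ I, c ⊔ b = ⊤ := by
    intro a
    constructor
    · intro h b hab
      have h1 : Order.Ideal.principal a ⊔ Order.Ideal.principal b = ⊤ := by
        apply ideal_eq_top
        rw [Order.Ideal.mem_sup]
        exact ⟨a, Order.Ideal.mem_principal.2 le_rfl, b, Order.Ideal.mem_principal.2 le_rfl,
          hab ▸ le_rfl⟩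
      have h2 := h _ h1
      have h3 : (⊤ : D) ∈ I ⊔ Order.Ideal.principal b := by rw [h2]; exact mem_top_ideal _
      rw [Order.Ideal.mem_sup] at h3
      obtain ⟨c, hc, d, hd, htop⟩ := h3
      refine ⟨c, hc, top_le_iff.1 ?_⟩
      exact le_trans htop (sup_le_sup_left (Order.Ideal.mem_principal.1 hd) c)
    · intro h K hK
      have h3 : (⊤ : D) ∈ Order.Ideal.principal a ⊔ K := by rw [hK]; exact mem_top_ideal _
      rw [Order.Ideal.mem_sup] at h3
      obtain ⟨x, hx, k, hk, htop⟩ := h3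
      have hak : a ⊔ k = ⊤ := top_le_iff.1
        (le_trans htop (sup_le_sup_right (Order.Ideal.mem_principal.1 hx) k))
      obtain ⟨c, hc, hck⟩ := h k hak
      apply ideal_eq_top
      rw [Order.Ideal.mem_sup]
      exact ⟨c, hc, k, hk, hck ▸ le_rfl⟩
  refine ⟨key, ?_⟩
  ext a
  simp only [Set.mem_iUnion, Set.mem_setOf_eq, SetLike.mem_coe]
  constructor
  · rintro ⟨J, hJ, haJ⟩
    intro b hab
    have hpJ : preceqI (Order.Ideal.principal a) I := by
      intro K hK
      apply hJ
      refine le_antisymm (fun x _ => mem_top_ideal x) ?_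
      rw [← hK]
      exact sup_le_sup_right (Order.Ideal.principal_le_iff.2 haJ) K
    exact (key a).1 hpJ b hab
  · intro h
    exact ⟨Order.Ideal.principal a, (key a).2 h, Order.Ideal.mem_principal.2 le_rfl⟩
end

section
/- For a distributive lattice D, the map ξ on the frame of ideals of D defined by ξ(I) = {a ∈ D : ∀b (a ∨ b = ⊤ → ∃c ∈ I, c ∨ b = ⊤)} is idempotent, hence a nucleus. -/
lemma xiSet_mono {D : Type*} [DistribLattice D] [BoundedOrder D] {I J : Set D}
    (h : I ⊆ J) : xiSet I ⊆ xiSet J := by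
  intro a ha b hb
  obtain ⟨c, hc, hcb⟩ := ha b hb
  exact ⟨c, h hc, hcb⟩

/-- `ξ` is idempotent on ideals, hence (being inflationary, monotone and
meet-preserving) a nucleus on the frame of ideals of `D`. -/
theorem xi_nucleus_on_ideals {D : Type*} [DistribLattice D] [BoundedOrder D] :
    (∀ I : Order.Ideal D, xiSet (xiSet (I : Set D)) = xiSet (I : Set D)) ∧
    (∀ I : Order.Ideal D, (I : Set D) ⊆ xiSet (I : Set D)) ∧
    (∀ I J : Order.Ideal D, (I : Set D) ⊆ J → xiSet (I : Set D) ⊆ xiSet (J : Set D)) ∧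
    (∀ I J : Order.Ideal D,
      xiSet ((I : Set D) ∩ (J : Set D)) = xiSet (I : Set D) ∩ xiSet (J : Set D)) ∧
    (∀ I : Order.Ideal D, ∃ K : Order.Ideal D, (K : Set D) = xiSet (I : Set D)) := by
  have infl : ∀ I : Order.Ideal D, (I : Set D) ⊆ xiSet (I : Set D) := by
    intro I a ha b hb
    exact ⟨a, ha, hb⟩
  refine ⟨?_, infl, fun I J h => xiSet_mono h, ?_, ?_⟩
  · intro I
    apply Set.Subset.antisymm
    · intro a ha b hb
      obtain ⟨c, hc, hcb⟩ := ha b hb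
      exact hc b hcb
    · exact xiSet_mono (infl I)
  · intro I J
    apply Set.Subset.antisymm
    · intro a ha
      exact ⟨xiSet_mono Set.inter_subset_left ha, xiSet_mono Set.inter_subset_right ha⟩
    · rintro a ⟨hI, hJ⟩ b hb
      obtain ⟨c, hc, hcb⟩ := hI b hb
      obtain ⟨d, hd, hdb⟩ := hJ b hb
      refine ⟨c ⊓ d, ⟨I.lower inf_le_left hc, J.lower inf_le_right hd⟩, ?_⟩
      rw [sup_inf_right, hcb, hdb, inf_top_eq]
  · intro I
    refine ⟨⟨⟨xiSet (I : Set D), ?_⟩, ?_, ?_⟩, rfl⟩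
    · intro a a' hle ha b hb
      exact ha b (top_unique (hb ▸ sup_le_sup_right hle b))
    · obtain ⟨x, hx⟩ := I.nonempty
      refine ⟨⊥, fun b hb => ⟨x, hx, ?_⟩⟩
      rw [bot_sup_eq] at hb
      rw [hb, sup_top_eq]
    · intro x hx y hy
      refine ⟨x ⊔ y, ?_, le_sup_left, le_sup_right⟩
      intro b hb
      rw [sup_assoc] at hb
      obtain ⟨c, hc, hcb⟩ := hx (y ⊔ b) hb
      rw [← sup_assoc, sup_comm c y, sup_assoc] at hcb
      obtain ⟨d, hd, hdb⟩ := hy (c ⊔ b) hcb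
      refine ⟨d ⊔ c, I.sup_mem hd hc, ?_⟩
      rw [sup_assoc]; exact hdb
end

section
/- For a distributive lattice D and any ideal I, the ideal ξ(I) = {a ∈ D : ∀b (a ∨ b = ⊤ → ∃c ∈ I, c ∨ b = ⊤)} equals the intersection of all maximal ideals of D containing I (with ξ(I) = D if no maximal ideal contains I). -/
/-- A maximal ideal: a proper ideal maximal among proper ideals. -/
def IsMaximalIdeal {D : Type*} [DistribLattice D] [BoundedOrder D] (M : Order.Ideal D) : Prop :=
  (M : Set D) ≠ Set.univ ∧
    ∀ N : Order.Ideal D, (N : Set D) ≠ Set.univ → M ≤ N → N = M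

lemma ideal_ne_univ_iff {D : Type*} [DistribLattice D] [BoundedOrder D]
    (M : Order.Ideal D) : (M : Set D) ≠ Set.univ ↔ (⊤ : D) ∉ M := by
  constructor
  · intro h htop
    exact h (Set.eq_univ_of_forall fun x => M.lower le_top htop)
  · intro h hu
    exact h (Set.eq_univ_iff_forall.mp hu ⊤)

/-- Every proper ideal is contained in a maximal ideal. -/
lemma exists_maximal_ideal {D : Type*} [DistribLattice D] [BoundedOrder D]
    (J : Order.Ideal D) (hJ : (⊤ : D) ∉ J) :
    ∃ M : Order.Ideal D, IsMaximalIdeal M ∧ J ≤ M := by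
  obtain ⟨s, hJs', hmax⟩ := zorn_subset_nonempty
      {s : Set D | Order.IsIdeal s ∧ (⊤ : D) ∉ s ∧ (J : Set D) ⊆ s}
      (fun c hc hchain hne => by
        refine ⟨c.sUnion, ⟨Order.isIdeal_sUnion_of_isChain
          (fun t ht => (hc ht).1) hchain hne, ?_, ?_⟩, fun t ht => Set.subset_sUnion_of_mem ht⟩
        · rintro ⟨t, ht, htop⟩
          exact (hc ht).2.1 htop
        · obtain ⟨t, ht⟩ := hne
          exact (hc ht).2.2.trans (Set.subset_sUnion_of_mem ht))
      (J : Set D) ⟨J.isIdeal, hJ, le_refl _⟩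
  obtain ⟨hid, hstop, hJs⟩ := hmax.prop
  refine ⟨hid.toIdeal, ⟨?_, ?_⟩, hJs⟩
  · rw [ideal_ne_univ_iff]; exact hstop
  · intro N hN hle
    have : (N : Set D) = s := hmax.eq_of_ge
      ⟨N.isIdeal, (ideal_ne_univ_iff N).1 hN, fun x hx => hle (hJs hx)⟩ hle
    exact Order.Ideal.ext this

/-- `ξ(I)` is the intersection of all maximal ideals containing `I`
(the empty intersection being all of `D`). -/
theorem xi_eq_inter_maximal {D : Type*} [DistribLattice D] [BoundedOrder D]
    (I : Order.Ideal D) :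
    xiSet (I : Set D) = ⋂ M ∈ {M : Order.Ideal D | IsMaximalIdeal M ∧ I ≤ M}, (M : Set D) := by
  ext a
  simp only [Set.mem_iInter, Set.mem_setOf_eq, SetLike.mem_coe]
  constructor
  · intro ha M ⟨⟨hMne, hMmax⟩, hIM⟩
    by_contra haM
    -- M ⊔ principal a is strictly bigger, hence not proper, so it is univ
    have hlt := Order.Ideal.lt_sup_principal_of_notMem haM
    have hne : ((M ⊔ Order.Ideal.principal a : Order.Ideal D) : Set D) = Set.univ := by
      by_contra h
      exact absurd (hMmax _ h le_sup_left) (ne_of_gt hlt)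
    have htop : (⊤ : D) ∈ (M ⊔ Order.Ideal.principal a : Order.Ideal D) :=
      Set.eq_univ_iff_forall.mp hne ⊤
    rw [Order.Ideal.mem_sup] at htop
    obtain ⟨m, hm, j, hj, hle⟩ := htop
    rw [Order.Ideal.mem_principal] at hj
    have hsup : a ⊔ m = ⊤ := top_le_iff.1 (by
      calc (⊤ : D) ≤ m ⊔ j := hle
        _ ≤ m ⊔ a := sup_le_sup_left hj m
        _ = a ⊔ m := sup_comm m a)
    obtain ⟨c, hcI, hc⟩ := ha m hsup
    have : (⊤ : D) ∈ M := hc ▸ M.sup_mem (hIM hcI) hm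
    exact (ideal_ne_univ_iff M).1 hMne this
  · intro ha b hab
    by_contra hcon
    push_neg at hcon
    set J : Order.Ideal D := I ⊔ Order.Ideal.principal b with hJdef
    have hJtop : (⊤ : D) ∉ J := by
      intro h
      rw [hJdef, Order.Ideal.mem_sup] at h
      obtain ⟨c, hc, j, hj, hle⟩ := h
      rw [Order.Ideal.mem_principal] at hj
      refine hcon c hc (top_le_iff.1 ?_)
      calc (⊤ : D) ≤ c ⊔ j := hle
        _ ≤ c ⊔ b := sup_le_sup_left hj c
    obtain ⟨M, hM, hJM⟩ := exists_maximal_ideal J hJtop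
    have haM : a ∈ M := ha M ⟨hM, le_trans le_sup_left hJM⟩
    have hbM : b ∈ M := hJM (Order.Ideal.mem_sup.2
      ⟨_, I.nonempty.choose_spec, b, Order.Ideal.mem_principal_self, le_sup_right⟩)
    have : (⊤ : D) ∈ M := hab ▸ M.sup_mem haM hbM
    exact (ideal_ne_univ_iff M).1 hM.1 this
end

section
/- For a bounded distributive lattice D, the following are equivalent: (1) every prime ideal is an intersection of maximal ideals; (2) every ideal is an intersection of maximal ideals; (3) the map ξ(I) = {a : ∀b (a ∨ b = ⊤ → ∃c ∈ I, c ∨ b = ⊤)} is the identity on ideals of D. -/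
def IsPrimeIdeal {D : Type*} [DistribLattice D] [BoundedOrder D] (I : Order.Ideal D) : Prop :=
  (I : Set D) ≠ Set.univ ∧ ∀ a b : D, a ⊓ b ∈ I → a ∈ I ∨ b ∈ I

/-- `I` is an intersection of maximal ideals (empty intersections allowed). -/
def IsInterOfMaximal {D : Type*} [DistribLattice D] [BoundedOrder D] (I : Order.Ideal D) : Prop :=
  ∃ S : Set (Order.Ideal D), (∀ M ∈ S, IsMaximalIdeal M) ∧
    (I : Set D) = ⋂ M ∈ S, (M : Set D)

section Aux

variable {D : Type*} [DistribLattice D] [BoundedOrder D]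

lemma univ_iff_top {I : Order.Ideal D} : (I : Set D) = Set.univ ↔ ⊤ ∈ I := by
  constructor
  · intro h
    rw [← SetLike.mem_coe, h]; trivial
  · intro h
    ext x
    simp only [Set.mem_univ, iff_true, SetLike.mem_coe]
    exact I.lower le_top h

/-- Every proper ideal extends to a maximal ideal. -/
lemma exists_maximal_above (I : Order.Ideal D) (hI : (I : Set D) ≠ Set.univ) :
    ∃ M : Order.Ideal D, IsMaximalIdeal M ∧ I ≤ M := by
  have hTI : ⊤ ∉ I := fun h => hI (univ_iff_top.2 h)
  set S : Set (Set D) := {J : Set D | Order.IsIdeal J ∧ (I : Set D) ⊆ J ∧ ⊤ ∉ J} with hS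
  have chainub : ∀ c ⊆ S, IsChain (· ⊆ ·) c → c.Nonempty → ∃ ub ∈ S, ∀ s ∈ c, s ⊆ ub := by
    intro c hcS hcC hcNe
    refine ⟨Set.sUnion c, ?_, fun s hs => Set.subset_sUnion_of_mem hs⟩
    obtain ⟨J, hJ⟩ := hcNe
    refine ⟨Order.isIdeal_sUnion_of_isChain (fun K hK => (hcS hK).1) hcC ⟨J, hJ⟩, ?_, ?_⟩
    · exact (hcS hJ).2.1.trans (Set.subset_sUnion_of_mem hJ)
    · rintro ⟨K, hKc, hTK⟩
      exact (hcS hKc).2.2 hTK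
  obtain ⟨Jset, hIJ, hmax⟩ := zorn_subset_nonempty S chainub (I : Set D)
    ⟨I.isIdeal, le_refl _, hTI⟩
  obtain ⟨Jidl, hIJ', hTJ⟩ := hmax.prop
  refine ⟨Jidl.toIdeal, ⟨?_, ?_⟩, hIJ'⟩
  · intro h
    apply hTJ
    have h2 : (⊤ : D) ∈ (Jidl.toIdeal : Set D) := h ▸ Set.mem_univ ⊤
    exact h2
  · intro N hN hMN
    have hNS : (N : Set D) ∈ S := ⟨N.isIdeal, hIJ'.trans hMN, fun h => hN (univ_iff_top.2 h)⟩
    have := hmax.le_of_ge hNS hMN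
    exact SetLike.coe_injective (le_antisymm this hMN)

lemma exists_sup_top_of_not_mem {M : Order.Ideal D} (hM : IsMaximalIdeal M) {a : D}
    (ha : a ∉ M) : ∃ m ∈ M, m ⊔ a = ⊤ := by
  set N := M ⊔ Order.Ideal.principal a with hN
  have hNuniv : (N : Set D) = Set.univ := by
    by_contra h
    have := hM.2 N h le_sup_left
    rw [← this] at ha
    exact ha (le_sup_right (a := M) (Order.Ideal.mem_principal.2 le_rfl))
  have hT : ⊤ ∈ N := univ_iff_top.1 hNuniv
  obtain ⟨j, hj, hja⟩ := (DistribLattice.mem_ideal_sup_principal a ⊤ M).1 hT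
  exact ⟨j, hj, le_antisymm le_top hja⟩

lemma subset_xiSet (I : Set D) : I ⊆ xiSet I := fun a ha b hab => ⟨a, ha, hab⟩

/-- ξ(I) is exactly the intersection of all maximal ideals containing I. -/
lemma xiSet_eq_inter (I : Order.Ideal D) :
    xiSet (I : Set D) = ⋂ M ∈ {M : Order.Ideal D | IsMaximalIdeal M ∧ I ≤ M}, (M : Set D) := by
  apply subset_antisymm
  · intro a ha
    simp only [Set.mem_iInter, Set.mem_setOf_eq, SetLike.mem_coe]
    rintro M ⟨hM, hIM⟩
    by_contra haM
    obtain ⟨m, hm, hma⟩ := exists_sup_top_of_not_mem hM haM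
    obtain ⟨c, hc, hcm⟩ := ha m (by rw [sup_comm]; exact hma)
    have : ⊤ ∈ M := hcm ▸ Order.Ideal.sup_mem (hIM hc) hm
    exact hM.1 (univ_iff_top.2 this)
  · intro a ha b hab
    by_contra hcon
    push_neg at hcon
    set J := I ⊔ Order.Ideal.principal b with hJ
    have hJproper : (J : Set D) ≠ Set.univ := by
      intro h
      obtain ⟨j, hj, hjb⟩ := (DistribLattice.mem_ideal_sup_principal b ⊤ I).1 (univ_iff_top.1 h)
      exact hcon j hj (le_antisymm le_top hjb)
    obtain ⟨M, hM, hJM⟩ := exists_maximal_above J hJproper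
    have haM : a ∈ M := by
      simp only [Set.mem_iInter, Set.mem_setOf_eq, SetLike.mem_coe] at ha
      exact ha M ⟨hM, le_sup_left.trans hJM⟩
    have hbM : b ∈ M := hJM (le_sup_right (a := I) (Order.Ideal.mem_principal.2 le_rfl))
    have : ⊤ ∈ M := hab ▸ Order.Ideal.sup_mem haM hbM
    exact hM.1 (univ_iff_top.2 this)

end Aux

theorem jacobson_equivalence {D : Type*} [DistribLattice D] [BoundedOrder D] :
    ((∀ I : Order.Ideal D, IsPrimeIdeal I → IsInterOfMaximal I) ↔
      (∀ I : Order.Ideal D, IsInterOfMaximal I)) ∧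
    ((∀ I : Order.Ideal D, IsInterOfMaximal I) ↔
      (∀ I : Order.Ideal D, xiSet (I : Set D) = (I : Set D))) := by
  -- (3) → (2)
  have h32 : (∀ I : Order.Ideal D, xiSet (I : Set D) = (I : Set D)) →
      ∀ I : Order.Ideal D, IsInterOfMaximal I := by
    intro h I
    exact ⟨{M | IsMaximalIdeal M ∧ I ≤ M}, fun M hM => hM.1,
      by rw [← h I, xiSet_eq_inter]⟩
  -- (2) → (3)
  have h23 : (∀ I : Order.Ideal D, IsInterOfMaximal I) →
      ∀ I : Order.Ideal D, xiSet (I : Set D) = (I : Set D) := by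
    intro h I
    obtain ⟨S, hSmax, hSeq⟩ := h I
    apply subset_antisymm _ (subset_xiSet _)
    rw [xiSet_eq_inter, hSeq]
    intro a ha
    simp only [Set.mem_iInter, Set.mem_setOf_eq, SetLike.mem_coe] at ha ⊢
    intro M hMS
    refine ha M ⟨hSmax M hMS, ?_⟩
    intro x hx
    have : (I : Set D) ⊆ (M : Set D) := by
      rw [hSeq]; exact Set.biInter_subset_of_mem hMS
    exact this hx
  -- (1) → (3)
  have h13 : (∀ I : Order.Ideal D, IsPrimeIdeal I → IsInterOfMaximal I) →
      ∀ I : Order.Ideal D, xiSet (I : Set D) = (I : Set D) := by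
    intro h I
    apply subset_antisymm _ (subset_xiSet _)
    intro a ha
    by_contra haI
    -- Stone separation: prime ideal P ⊇ I avoiding a
    have hdisj : Disjoint ((Order.PFilter.principal a : Order.PFilter D) : Set D) (I : Set D) := by
      rw [Set.disjoint_left]
      intro x hx hxI
      exact haI (I.lower (Order.PFilter.mem_principal.1 hx) hxI)
    obtain ⟨P, hPprime, hIP, hPF⟩ :=
      DistribLattice.prime_ideal_of_disjoint_filter_ideal hdisj
    have haP : a ∉ P :=
      Set.disjoint_left.1 hPF (Order.PFilter.mem_principal.2 le_rfl)
    have hPprime' : IsPrimeIdeal P :=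
      ⟨hPprime.toIsProper.ne_univ, fun x y hxy => hPprime.mem_or_mem hxy⟩
    obtain ⟨S, hSmax, hSeq⟩ := h P hPprime'
    -- a ∉ P, so a misses some maximal M ∈ S, and M ⊇ P ⊇ I
    have : a ∉ ⋂ M ∈ S, (M : Set D) := by rw [← hSeq]; exact haP
    simp only [Set.mem_iInter, not_forall] at this
    obtain ⟨M, hMS, haM⟩ := this
    have hPM : P ≤ M := by
      intro x hx
      have : (P : Set D) ⊆ (M : Set D) := by
        rw [hSeq]; exact Set.biInter_subset_of_mem hMS
      exact this hx
    rw [xiSet_eq_inter] at ha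
    simp only [Set.mem_iInter, Set.mem_setOf_eq, SetLike.mem_coe] at ha
    exact haM (ha M ⟨hSmax M hMS, hIP.trans hPM⟩)
  refine ⟨⟨fun h1 => h32 (h13 h1), fun h2 I _ => h2 I⟩, ⟨h23, h32⟩⟩
end
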